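/- arXiv:1308.0546 — 2 statements merged into one kernel-verified Lean document; each statement's English description precedes it below -/
import Mathlib

section
/- Let T be a semistandard tableau of skew shape, let T_1 be the result of a jeu de taquin slide applied to T starting at an inner corner I_1, and let T_2 be the result of a jeu de taquin slide applied to T_1 starting at an inner corner I_2 lying in the same row as I_1. Then on any row of T that contains boxes involved in the first slide and boxes involved in the second slide, the rightmost box involved in the second slide lies strictly to the left of the rightmost box involved in the first slide. -/
/-!
In every row it meets, the first slide path leaves through its rightmost box `z` there, either
stopping at `z` or stepping down from it; these exit columns weakly increase from row to row.
Following the second slide path box by box, we show that it always stays strictly left of the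
exit box of its current row. A step down preserves this because exit columns increase. A step
right onto `z` is impossible: after the first slide `z` is either empty or holds the entry `y`
that was below it, while the box below the hole of the second slide was not touched by the first
slide and holds an entry `≤ y` by row semistandardness, so the second slide would move down.
-/

namespace Homomesy

/-- The next box of a jeu de taquin slide whose hole is currently at `b`:
whichever of the boxes below/right of `b` holds the smaller value (ties to below),
boxes holding `0` being unavailable. -/
def fnext (f : ℕ × ℕ → ℕ) (b : ℕ × ℕ) : Option (ℕ × ℕ) :=
  let dn := (b.1 + 1, b.2)
  let rt := (b.1, b.2 + 1)
  if f dn ≠ 0 then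
    if f rt ≠ 0 then (if f dn ≤ f rt then some dn else some rt) else some dn
  else if f rt ≠ 0 then some rt else none

/-- Perform a full jeu de taquin slide into the hole at `b` (with fuel). -/
def slideAux : (ℕ × ℕ → ℕ) → ℕ × ℕ → ℕ → (ℕ × ℕ → ℕ)
  | f, _, 0 => f
  | f, b, fuel + 1 =>
    match fnext f b with
    | none => f
    | some c => slideAux (fun x => if x = b then f c else if x = c then 0 else f x) c fuel

/-- The list of boxes involved in the jeu de taquin slide into the hole at `b`. -/
def slidePath : (ℕ × ℕ → ℕ) → ℕ × ℕ → ℕ → List (ℕ × ℕ)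
  | _, b, 0 => [b]
  | f, b, fuel + 1 =>
    match fnext f b with
    | none => [b]
    | some c => b :: slidePath (fun x => if x = b then f c else if x = c then 0 else f x) c fuel

/-- `f` is a semistandard Young tableau of skew shape `lam / mu`. -/
def IsSkewSSYT (lam mu : YoungDiagram) (f : ℕ × ℕ → ℕ) : Prop :=
  mu ≤ lam ∧
  (∀ x ∈ lam.cells, x ∉ mu.cells → 1 ≤ f x) ∧
  (∀ x, x ∉ lam.cells → f x = 0) ∧
  (∀ x ∈ mu.cells, f x = 0) ∧
  (∀ i j, (i, j) ∈ lam.cells → (i, j) ∉ mu.cells → (i, j + 1) ∈ lam.cells →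
    f (i, j) ≤ f (i, j + 1)) ∧
  (∀ i j, (i, j) ∈ lam.cells → (i, j) ∉ mu.cells → (i + 1, j) ∈ lam.cells →
    f (i, j) < f (i + 1, j))

section

variable {lam mu : YoungDiagram} {f g : ℕ × ℕ → ℕ} {b c : ℕ × ℕ} {fuel : ℕ}

abbrev moveHole (f : ℕ × ℕ → ℕ) (b c : ℕ × ℕ) : ℕ × ℕ → ℕ :=
  fun x => if x = b then f c else if x = c then 0 else f x

theorem fnext_eq_some (h : fnext f b = some c) :
    (c = (b.1 + 1, b.2) ∨ c = (b.1, b.2 + 1)) ∧ f c ≠ 0 := by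
  simp only [fnext] at h
  split_ifs at h <;> simp_all

theorem fnext_eq_some_right (h : fnext f b = some (b.1, b.2 + 1)) :
    f (b.1 + 1, b.2) = 0 ∨ f (b.1, b.2 + 1) < f (b.1 + 1, b.2) := by
  simp only [fnext] at h
  split_ifs at h <;> simp_all [Prod.ext_iff]

theorem le_of_fnext_eq_some (h : fnext f b = some c) : b ≤ c := by
  rcases (fnext_eq_some h).1 with rfl | rfl <;> simp [Prod.le_def]

theorem diag_of_fnext_eq_some (h : fnext f b = some c) :
    c.1 + c.2 = b.1 + b.2 + 1 := by
  rcases (fnext_eq_some h).1 with rfl | rfl <;> simp <;> omega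

theorem fnext_congr (h : ∀ x : ℕ × ℕ, b.1 + b.2 < x.1 + x.2 → f x = g x) :
    fnext f b = fnext g b := by
  simp only [fnext]
  rw [h (b.1 + 1, b.2) (by simp), h (b.1, b.2 + 1) (by simp)]

theorem moveHole_apply_of_diag_lt {x : ℕ × ℕ} (hc : fnext f b = some c)
    (hx : c.1 + c.2 < x.1 + x.2) : moveHole f b c x = f x := by
  have hcb := diag_of_fnext_eq_some hc
  have hxb : x ≠ b := by rintro rfl; omega
  have hxc : x ≠ c := by rintro rfl; omega
  simp [moveHole, hxb, hxc]

def slideNth (f : ℕ × ℕ → ℕ) (b : ℕ × ℕ) : ℕ → Option (ℕ × ℕ)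
  | 0 => some b
  | n + 1 => (slideNth f b n).bind (fnext f)

@[simp]
theorem slideNth_zero : slideNth f b 0 = some b := rfl

theorem slideNth_succ (n : ℕ) : slideNth f b (n + 1) = (slideNth f b n).bind (fnext f) := rfl

theorem fnext_of_slideNth_succ {n : ℕ} {x y : ℕ × ℕ} (hx : slideNth f b n = some x)
    (hy : slideNth f b (n + 1) = some y) : fnext f x = some y := by
  rwa [slideNth_succ, hx, Option.bind_some] at hy

theorem slideNth_eq_none_of_le {n m : ℕ} (h : slideNth f b n = none) (hle : n ≤ m) :
    slideNth f b m = none := by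
  induction m, hle using Nat.le_induction with
  | base => exact h
  | succ k _ ih => rw [slideNth_succ, ih, Option.bind_none]

theorem lt_of_slideNth_eq_some {t n : ℕ} {x : ℕ × ℕ} (ht : slideNth f b t = none)
    (h : slideNth f b n = some x) : n < t := by
  by_contra! hle
  simp [slideNth_eq_none_of_le ht hle] at h

theorem exists_slideNth_eq_some_of_le {n m : ℕ} {x : ℕ × ℕ} (h : slideNth f b m = some x)
    (hle : n ≤ m) : ∃ y, slideNth f b n = some y := by
  cases hy : slideNth f b n with
  | some y => exact ⟨y, rfl⟩
  | none => simp [slideNth_eq_none_of_le hy hle] at h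

theorem diag_of_slideNth_eq_some {n : ℕ} {x : ℕ × ℕ} (h : slideNth f b n = some x) :
    x.1 + x.2 = b.1 + b.2 + n := by
  induction n generalizing x with
  | zero => simp_all
  | succ k ih =>
    obtain ⟨y, hy⟩ := exists_slideNth_eq_some_of_le h k.le_succ
    have := diag_of_fnext_eq_some (fnext_of_slideNth_succ hy h)
    have := ih hy
    omega

theorem slideNth_mono {n m : ℕ} {x y : ℕ × ℕ} (hle : n ≤ m) (hx : slideNth f b n = some x)
    (hy : slideNth f b m = some y) : x ≤ y := by
  induction m, hle using Nat.le_induction generalizing y with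
  | base => simp_all
  | succ k _ ih =>
    obtain ⟨z, hz⟩ := exists_slideNth_eq_some_of_le hy k.le_succ
    exact (ih hz).trans (le_of_fnext_eq_some (fnext_of_slideNth_succ hz hy))

theorem slideNth_succ_of_fnext (h : fnext f b = some c) (n : ℕ) :
    slideNth f b (n + 1) = slideNth f c n := by
  induction n with
  | zero => simp [slideNth_succ, h]
  | succ k ih => rw [slideNth_succ, ih, slideNth_succ]

theorem slideNth_congr (h : ∀ x : ℕ × ℕ, b.1 + b.2 < x.1 + x.2 → f x = g x)
    (n : ℕ) : slideNth f b n = slideNth g b n := by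
  induction n with
  | zero => rfl
  | succ k ih =>
    rw [slideNth_succ, slideNth_succ, ih]
    cases hy : slideNth g b k with
    | none => rfl
    | some y =>
      have := diag_of_slideNth_eq_some hy
      exact fnext_congr fun x hx => h x (by omega)

theorem exists_slideNth_row_eq {n r : ℕ} {x : ℕ × ℕ} (h : slideNth f b n = some x)
    (hbr : b.1 ≤ r) (hrx : r ≤ x.1) : ∃ m z, slideNth f b m = some z ∧ z.1 = r := by
  induction n generalizing x with
  | zero =>
    simp only [slideNth_zero, Option.some.injEq] at h
    subst h
    exact ⟨0, _, rfl, by omega⟩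
  | succ k ih =>
    obtain ⟨y, hy⟩ := exists_slideNth_eq_some_of_le h k.le_succ
    rcases Nat.lt_or_ge y.1 r with hlt | hge
    · refine ⟨k + 1, x, h, ?_⟩
      rcases (fnext_eq_some (fnext_of_slideNth_succ hy h)).1 with rfl | rfl <;>
        simp at hrx ⊢ <;> omega
    · exact ih hy hge

theorem slideNth_eq_none_of_card_lt (hout : ∀ x, x ∉ lam.cells → f x = 0) :
    slideNth f b (lam.cells.card + 1) = none := by
  by_contra hne
  obtain ⟨z, hz⟩ := Option.ne_none_iff_exists'.mp hne
  have hrange : Finset.range (lam.cells.card + 1) ⊆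
      lam.cells.image fun x => x.1 + x.2 - (b.1 + b.2 + 1) := by
    intro n hn
    obtain ⟨x, hx⟩ := exists_slideNth_eq_some_of_le hz (Finset.mem_range.mp hn)
    obtain ⟨y, hy⟩ := exists_slideNth_eq_some_of_le hx (Nat.le_succ n)
    have hfx := (fnext_eq_some (fnext_of_slideNth_succ hy hx)).2
    refine Finset.mem_image.mpr ⟨x, by_contra fun hxl => hfx (hout x hxl), ?_⟩
    have := diag_of_slideNth_eq_some hx
    omega
  have := (Finset.card_le_card hrange).trans Finset.card_image_le
  simp at this

theorem slideNth_eq_some_of_fnext_eq_none (h : fnext f b = none) {n : ℕ} {x : ℕ × ℕ}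
    (hx : slideNth f b n = some x) : n = 0 ∧ x = b := by
  cases n with
  | zero => simp_all
  | succ m =>
    have h1 : slideNth f b 1 = none := by simp [slideNth_succ, h]
    simp [slideNth_eq_none_of_le h1 (Nat.le_add_left 1 m)] at hx

theorem slideNth_moveHole (h : fnext f b = some c) (n : ℕ) :
    slideNth (moveHole f b c) c n = slideNth f b (n + 1) := by
  rw [slideNth_succ_of_fnext h, slideNth_congr fun x hx => moveHole_apply_of_diag_lt h hx]

theorem slidePath_succ_of_fnext (h : fnext f b = some c) (k : ℕ) :
    slidePath f b (k + 1) = b :: slidePath (moveHole f b c) c k := by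
  rw [slidePath, h]

theorem slidePath_succ_of_fnext_eq_none (h : fnext f b = none) (k : ℕ) :
    slidePath f b (k + 1) = [b] := by
  rw [slidePath, h]

theorem slideAux_succ_of_fnext (h : fnext f b = some c) (k : ℕ) :
    slideAux f b (k + 1) = slideAux (moveHole f b c) c k := by
  rw [slideAux, h]

theorem slideAux_succ_of_fnext_eq_none (h : fnext f b = none) (k : ℕ) :
    slideAux f b (k + 1) = f := by
  rw [slideAux, h]

theorem mem_slidePath_iff {fuel : ℕ} {x : ℕ × ℕ} :
    x ∈ slidePath f b fuel ↔ ∃ n ≤ fuel, slideNth f b n = some x := by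
  induction fuel generalizing f b with
  | zero => simp [slidePath, eq_comm]
  | succ k ih =>
    cases hc : fnext f b with
    | none =>
      rw [slidePath_succ_of_fnext_eq_none hc, List.mem_singleton]
      constructor
      · rintro rfl
        exact ⟨0, by omega, rfl⟩
      · rintro ⟨n, -, hn⟩
        exact (slideNth_eq_some_of_fnext_eq_none hc hn).2
    | some c =>
      rw [slidePath_succ_of_fnext hc, List.mem_cons, ih]
      constructor
      · rintro (rfl | ⟨n, hn, h⟩)
        · exact ⟨0, by omega, rfl⟩
        · exact ⟨n + 1, by omega, by rwa [← slideNth_moveHole hc]⟩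
      · rintro ⟨_ | n, hn, h⟩
        · simp_all
        · exact Or.inr ⟨n, by omega, by rwa [slideNth_moveHole hc]⟩

theorem slideAux_apply_of_forall_ne {fuel : ℕ} {x : ℕ × ℕ}
    (hx : ∀ n ≤ fuel, slideNth f b n ≠ some x) : slideAux f b fuel x = f x := by
  induction fuel generalizing f b with
  | zero => rfl
  | succ k ih =>
    cases hc : fnext f b with
    | none => rw [slideAux_succ_of_fnext_eq_none hc]
    | some c =>
      have hxb : x ≠ b := fun h => hx 0 (by omega) (by simp [h])
      have hxc : x ≠ c := fun h => hx 1 (by omega) (by simp [slideNth_succ, hc, h])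
      rw [slideAux_succ_of_fnext hc, ih fun n hn h => hx (n + 1) (by omega) ?_]
      · simp [moveHole, hxb, hxc]
      · rwa [← slideNth_moveHole hc]

theorem slideAux_apply_of_slideNth_succ {fuel n : ℕ} {x y : ℕ × ℕ} (hn : n < fuel)
    (hx : slideNth f b n = some x) (hy : slideNth f b (n + 1) = some y) :
    slideAux f b fuel x = f y := by
  induction fuel generalizing f b n with
  | zero => omega
  | succ k ih =>
    cases hc : fnext f b with
    | none => exact absurd (slideNth_eq_some_of_fnext_eq_none hc hy).1 n.succ_ne_zero
    | some c =>
      rw [slideAux_succ_of_fnext hc]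
      cases n with
      | zero =>
        obtain rfl : x = b := by simpa [eq_comm] using hx
        obtain rfl : y = c := by simpa [slideNth_succ, hc, eq_comm] using hy
        rw [slideAux_apply_of_forall_ne fun m _ hm => ?_]
        · simp [moveHole]
        · have := diag_of_slideNth_eq_some hm
          have := diag_of_fnext_eq_some hc
          omega
      | succ m =>
        rw [← slideNth_moveHole hc] at hx hy
        rw [ih (by omega) hx hy, moveHole_apply_of_diag_lt hc]
        have := diag_of_slideNth_eq_some hy
        omega

theorem slideAux_apply_of_slideNth_succ_eq_none (hb : f b = 0) {fuel n : ℕ} {x : ℕ × ℕ}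
    (hn : n ≤ fuel) (hx : slideNth f b n = some x) (hnext : slideNth f b (n + 1) = none) :
    slideAux f b fuel x = 0 := by
  induction fuel generalizing f b n with
  | zero =>
    obtain rfl : n = 0 := by omega
    obtain rfl : x = b := by simpa [eq_comm] using hx
    exact hb
  | succ k ih =>
    cases hc : fnext f b with
    | none =>
      obtain rfl := (slideNth_eq_some_of_fnext_eq_none hc hx).2
      rwa [slideAux_succ_of_fnext_eq_none hc]
    | some c =>
      rw [slideAux_succ_of_fnext hc]
      cases n with
      | zero => simp [slideNth_succ, hc] at hnext
      | succ m =>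
        have hcb : c ≠ b := fun h => by have := diag_of_fnext_eq_some hc; rw [h] at this; omega
        rw [← slideNth_moveHole hc] at hx hnext
        exact ih (by simp [moveHole, hcb]) (by omega) hx hnext

def IsLastInRow (f : ℕ × ℕ → ℕ) (b : ℕ × ℕ) (N : ℕ) (z : ℕ × ℕ) : Prop :=
  slideNth f b N = some z ∧ ∀ n c, slideNth f b n = some (z.1, c) → c ≤ z.2

theorem IsLastInRow.slideNth_succ_eq_none_or {N : ℕ} {z : ℕ × ℕ} (hz : IsLastInRow f b N z) :
    slideNth f b (N + 1) = none ∨ slideNth f b (N + 1) = some (z.1 + 1, z.2) := by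
  cases hy : slideNth f b (N + 1) with
  | none => exact Or.inl rfl
  | some y =>
    rcases (fnext_eq_some (fnext_of_slideNth_succ hz.1 hy)).1 with rfl | rfl
    · exact Or.inr rfl
    · simpa using hz.2 _ _ hy

theorem IsLastInRow.col_le {N n : ℕ} {z y : ℕ × ℕ} (hz : IsLastInRow f b N z)
    (hy : slideNth f b n = some y) (hrow : z.1 < y.1) : z.2 ≤ y.2 := by
  rcases le_or_gt n N with hle | hlt
  · have := Prod.le_def.mp (slideNth_mono hle hy hz.1)
    omega
  · rcases hz.slideNth_succ_eq_none_or with hnone | hdown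
    · simp [slideNth_eq_none_of_le hnone hlt] at hy
    · exact (Prod.le_def.mp (slideNth_mono hlt hdown hy)).2

theorem exists_isLastInRow {t n : ℕ} {x : ℕ × ℕ} (ht : slideNth f b t = none)
    (hx : slideNth f b n = some x) : ∃ N z, IsLastInRow f b N z ∧ z.1 = x.1 := by
  classical
  let InRow := fun m => ∃ c, slideNth f b m = some (x.1, c)
  obtain ⟨c, hc⟩ : InRow (Nat.findGreatest InRow t) :=
    Nat.findGreatest_spec (lt_of_slideNth_eq_some ht hx).le ⟨x.2, hx⟩
  refine ⟨_, (x.1, c), ⟨hc, fun m c' hm => ?_⟩, rfl⟩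
  have hmN : m ≤ Nat.findGreatest InRow t := by
    by_contra! hgt
    exact Nat.findGreatest_is_greatest hgt (lt_of_slideNth_eq_some ht hm).le ⟨c', hm⟩
  exact (Prod.le_def.mp (slideNth_mono hmN hm hc)).2

theorem IsSkewSSYT.pos_and_le_right (hf : IsSkewSSYT lam mu f) {x : ℕ × ℕ} (hx : x ∉ mu.cells)
    (hr : f (x.1, x.2 + 1) ≠ 0) :
    0 < f x ∧ f x ≤ f (x.1, x.2 + 1) := by
  obtain ⟨-, hpos, hout, -, hrowle, -⟩ := hf
  have hrlam : (x.1, x.2 + 1) ∈ lam.cells := by_contra fun h => hr (hout _ h)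
  have hxlam : x ∈ lam.cells := lam.isLowerSet (Prod.mk_le_mk.mpr ⟨le_rfl, x.2.le_succ⟩) hrlam
  exact ⟨hpos x hxlam hx, hrowle x.1 x.2 hxlam hx hrlam⟩

theorem fnext_slideAux_ne_of_isLastInRow (hf : IsSkewSSYT lam mu f) (hb : f b = 0)
    (hfuel : slideNth f b fuel = none) {N : ℕ} {w : ℕ × ℕ}
    (hz : IsLastInRow f b N (w.1, w.2 + 1)) (hmu : (w.1 + 1, w.2) ∉ mu.cells) :
    fnext (slideAux f b fuel) w ≠ some (w.1, w.2 + 1) := by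
  intro hw
  have hN := lt_of_slideNth_eq_some hfuel hz.1
  have hgz := (fnext_eq_some hw).2
  rcases hz.slideNth_succ_eq_none_or with hnone | hdown
  · exact hgz (slideAux_apply_of_slideNth_succ_eq_none hb hN.le hz.1 hnone)
  · have hgz' := slideAux_apply_of_slideNth_succ hN hz.1 hdown
    have hgd : slideAux f b fuel (w.1 + 1, w.2) = f (w.1 + 1, w.2) :=
      slideAux_apply_of_forall_ne fun n _ hn => by simpa using hz.col_le hn (by simp)
    obtain ⟨hpos, hle⟩ := hf.pos_and_le_right hmu (by simpa [hgz'] using hgz)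
    rcases fnext_eq_some_right hw with h | h <;> simp only [hgd, hgz'] at h hle <;> omega

theorem col_lt_of_isLastInRow (hf : IsSkewSSYT lam mu f) {I1 I2 : ℕ × ℕ} (hI1 : f I1 = 0)
    (hfuel : slideNth f I1 fuel = none) (hrow : I2.1 = I1.1) (hcol : I2.2 < I1.2)
    (hmu : (I1.1 + 1, I2.2) ∉ mu.cells) {j : ℕ} {x : ℕ × ℕ}
    (hx : slideNth (slideAux f I1 fuel) I2 j = some x) {N : ℕ} {z : ℕ × ℕ}
    (hz : IsLastInRow f I1 N z) (hzx : z.1 = x.1) : x.2 < z.2 := by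
  induction j generalizing x N z with
  | zero =>
    obtain rfl : x = I2 := by simpa [eq_comm] using hx
    have := hz.2 0 I1.2 (by simp [hzx, hrow])
    omega
  | succ k ih =>
    obtain ⟨w, hw⟩ := exists_slideNth_eq_some_of_le hx k.le_succ
    have hwx := fnext_of_slideNth_succ hw hx
    have hIw := Prod.le_def.mp (slideNth_mono (Nat.zero_le k) slideNth_zero hw)
    rcases (fnext_eq_some hwx).1 with rfl | rfl
    · obtain ⟨n, y, hy, hyrow⟩ := exists_slideNth_row_eq hz.1 (r := w.1) (by omega) (by
        simp only at hzx; omega)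
      obtain ⟨N₂, z₂, hz₂, hz₂row⟩ := exists_isLastInRow hfuel hy
      have hw_lt : w.2 < z₂.2 := ih hw hz₂ (by omega)
      have hz₂_le : z₂.2 ≤ z.2 := hz₂.col_le hz.1 (by simp only at hzx; omega)
      exact hw_lt.trans_le hz₂_le
    · refine lt_of_le_of_ne (ih hw hz hzx) fun heq => ?_
      obtain rfl : z = (w.1, w.2 + 1) := Prod.ext hzx heq.symm
      have hmu' : (w.1 + 1, w.2) ∉ mu.cells := fun h =>
        hmu (mu.isLowerSet (Prod.mk_le_mk.mpr ⟨by omega, hIw.2⟩) h)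
      exact fnext_slideAux_ne_of_isLastInRow hf hI1 hfuel hz hmu' hwx

end

theorem stmt4 (lam mu : YoungDiagram) (f : ℕ × ℕ → ℕ) (hf : IsSkewSSYT lam mu f)
    (I1 I2 : ℕ × ℕ)
    (h1 : I1 ∈ mu.cells ∧ (I1.1 + 1, I1.2) ∉ mu.cells ∧ (I1.1, I1.2 + 1) ∉ mu.cells)
    (hrow : I2.1 = I1.1) (hne : I2 ≠ I1)
    (h2 : I2 ∈ mu.cells ∧ ((I2.1 + 1, I2.2) ∉ mu.cells ∨ (I2.1 + 1, I2.2) = I1) ∧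
      ((I2.1, I2.2 + 1) ∉ mu.cells ∨ (I2.1, I2.2 + 1) = I1)) :
    ∀ r : ℕ,
      (∃ b ∈ slidePath f I1 (lam.cells.card + 1), b.1 = r) →
      (∃ b ∈ slidePath (slideAux f I1 (lam.cells.card + 1)) I2 (lam.cells.card + 1), b.1 = r) →
      ∀ b2 ∈ slidePath (slideAux f I1 (lam.cells.card + 1)) I2 (lam.cells.card + 1), b2.1 = r →
        ∃ b1 ∈ slidePath f I1 (lam.cells.card + 1), b1.1 = r ∧ b2.2 < b1.2 := by
  rintro r ⟨b0, hb0, rfl⟩ - b2 hb2 hb2r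
  obtain ⟨hI1mu, -, hI1rt⟩ := h1
  obtain ⟨hI2mu, hI2dn, -⟩ := h2
  have hcol : I2.2 < I1.2 := by
    refine lt_of_le_of_ne (by_contra fun h => hI1rt (mu.isLowerSet ?_ hI2mu))
      fun h => hne (Prod.ext hrow h)
    exact Prod.mk_le_mk.mpr ⟨hrow.ge, by omega⟩
  have hmu : (I1.1 + 1, I2.2) ∉ mu.cells := by
    rcases hI2dn with h | h
    · rwa [hrow] at h
    · simp [Prod.ext_iff] at h
      omega
  have hfuel := slideNth_eq_none_of_card_lt (b := I1) hf.2.2.1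
  obtain ⟨n0, -, hn0⟩ := mem_slidePath_iff.mp hb0
  obtain ⟨N, z, hz, hzr⟩ := exists_isLastInRow hfuel hn0
  obtain ⟨j, -, hj⟩ := mem_slidePath_iff.mp hb2
  have hN := lt_of_slideNth_eq_some hfuel hz.1
  refine ⟨z, mem_slidePath_iff.mpr ⟨N, hN.le, hz.1⟩, hzr, ?_⟩
  exact col_lt_of_isLastInRow hf (hf.2.2.2.1 I1 hI1mu) hfuel hrow hcol hmu hj hz (by omega)

end Homomesy
end

section
/- For any partition λ, any q with 0 ≤ q < |λ|, and any T ∈ Inc^q(λ), K-evacuation is an involution and conjugates K-promotion to its inverse: E_K(E_K(T)) = T and E_K(P_K(T)) = P_K^{−1}(E_K(T)). -/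
/-!
K-promotion is the word `c_{d-1} = t₁ t₂ ⋯ t_{d-1}` (words act from left to right) in the
K-Bender–Knuth involutions `tᵢ`, which exchange the labels `i` and `i + 1` in every box not
adjacent to a box carrying the other one: sliding the bullet past the label `i + 1` is `tᵢ` up
to relabelling. On increasing tableaux the `tᵢ` are involutions and `tᵢ tⱼ = tⱼ tᵢ` for
`|i - j| ≥ 2`. As for Schützenberger's evacuation in the symmetric group, these relations alone
show that `ε = c_{d-1} c_{d-2} ⋯ c₀` satisfies `ε ε = 1`, `c_{d-1} ε c_{d-1} = ε`, and
`ε c_{d-1}^{d-j} = c_{j-1} ⋯ c₀ β` with all letters of `β` larger than `j`. Letters other than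
`j` do not change which boxes carry entries `≤ j`, so
`(P_K^{d-j} T)_{≤ j} = (P_K^{d-j} (ε ε T))_{≤ j} = (ε T)_{≤ j}`: K-evacuation is `ε`.
-/

namespace Homomesy

/-- Two boxes are adjacent when they share an edge. -/
def adj (x y : ℕ × ℕ) : Prop :=
  (x.1 = y.1 ∧ (x.2 = y.2 + 1 ∨ y.2 = x.2 + 1)) ∨
  (x.2 = y.2 ∧ (x.1 = y.1 + 1 ∨ y.1 = x.1 + 1))

instance : DecidableRel adj := fun x y => by unfold adj; infer_instance

/-- `switch_{i,•}` (the bullet `•` is encoded by `0`): simultaneously, each box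
labeled `•` adjacent to a box labeled `i` is relabeled `i`, and each box labeled `i`
adjacent to a box labeled `•` is relabeled `•`. -/
def kswitch (shape : Finset (ℕ × ℕ)) (i : ℕ) (g : ℕ × ℕ → ℕ) : ℕ × ℕ → ℕ := fun x =>
  if x ∈ shape ∧ g x = 0 ∧ ∃ y ∈ shape, adj x y ∧ g y = i then i
  else if x ∈ shape ∧ g x = i ∧ ∃ y ∈ shape, adj x y ∧ g y = 0 then 0
  else g x

/-- K-promotion of an increasing tableau with entries `{1, …, d}`: replace each `1`
by `•`, apply `switch_{2,•}, …, switch_{d,•}` successively, decrement all numeric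
labels and replace each `•` by `d`. -/
def kpromote (shape : Finset (ℕ × ℕ)) (d : ℕ) (f : ℕ × ℕ → ℕ) : ℕ × ℕ → ℕ :=
  let f1 : ℕ × ℕ → ℕ := fun x => if f x = 1 then 0 else f x
  let g := (List.range (d - 1)).foldl (fun h i => kswitch shape (i + 2) h) f1
  fun x => if x ∈ shape then (if g x = 0 then d else g x - 1) else 0

/-- `f` is an increasing tableau of shape `shape` with entry set exactly `{1, …, d}`. -/
def IsInc (shape : Finset (ℕ × ℕ)) (d : ℕ) (f : ℕ × ℕ → ℕ) : Prop :=
  (∀ x, x ∉ shape → f x = 0) ∧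
  (∀ i j, (i, j) ∈ shape → (i, j + 1) ∈ shape → f (i, j) < f (i, j + 1)) ∧
  (∀ i j, (i, j) ∈ shape → (i + 1, j) ∈ shape → f (i, j) < f (i + 1, j)) ∧
  (∀ x ∈ shape, 1 ≤ f x ∧ f x ≤ d) ∧
  (∀ v, 1 ≤ v → v ≤ d → ∃ x ∈ shape, f x = v)

/-- K-evacuation: the increasing tableau encoded by the chain of Young diagrams
`(P_K^[d-j] T)_{≤ j}` for `0 ≤ j ≤ d`; its entry at a box `x` is the least `j` whose
diagram contains `x`. -/
def kevac (shape : Finset (ℕ × ℕ)) (d : ℕ) (f : ℕ × ℕ → ℕ) : ℕ × ℕ → ℕ := fun x =>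
  if x ∈ shape then
    if h : ((Finset.Icc 1 d).filter fun j => (kpromote shape d)^[d - j] f x ≤ j).Nonempty
    then ((Finset.Icc 1 d).filter fun j => (kpromote shape d)^[d - j] f x ≤ j).min' h
    else 0
  else 0

section Words

variable {α : Type*}

def applyWord (t : ℕ → α → α) (w : List ℕ) (a : α) : α :=
  w.foldl (fun b i => t i b) a

variable {t : ℕ → α → α}

@[simp] lemma applyWord_nil (a : α) : applyWord t [] a = a := rfl

@[simp] lemma applyWord_cons (i : ℕ) (w : List ℕ) (a : α) :
    applyWord t (i :: w) a = applyWord t w (t i a) := rfl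

@[simp] lemma applyWord_append (w₁ w₂ : List ℕ) (a : α) :
    applyWord t (w₁ ++ w₂) a = applyWord t w₂ (applyWord t w₁ a) :=
  List.foldl_append

structure FarCommutingInvolutions (t : ℕ → α → α) (P : α → Prop) (n : ℕ) : Prop where
  mapsTo : ∀ i, 1 ≤ i → i ≤ n → ∀ a, P a → P (t i a)
  involutive : ∀ i, 1 ≤ i → i ≤ n → ∀ a, P a → t i (t i a) = a
  comm : ∀ i j, 1 ≤ i → i + 2 ≤ j → j ≤ n → ∀ a, P a → t i (t j a) = t j (t i a)

def promotionWord (k : ℕ) : List ℕ := List.range' 1 k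

def evacuationWord : ℕ → List ℕ
  | 0 => []
  | k + 1 => promotionWord k ++ evacuationWord k

lemma mem_promotionWord {i k : ℕ} : i ∈ promotionWord k ↔ 1 ≤ i ∧ i ≤ k := by
  simp only [promotionWord, List.mem_range'_1]; omega

lemma promotionWord_add (k m : ℕ) :
    promotionWord (k + m) = promotionWord k ++ List.range' (k + 1) m := by
  rw [promotionWord, promotionWord, ← List.range'_append_1, Nat.add_comm 1 k]

lemma promotionWord_succ (k : ℕ) : promotionWord (k + 1) = promotionWord k ++ [k + 1] :=
  promotionWord_add k 1

lemma mem_evacuationWord {i k : ℕ} (h : i ∈ evacuationWord k) : 1 ≤ i ∧ i + 1 ≤ k := by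
  induction k with
  | zero => simp [evacuationWord] at h
  | succ k ih =>
    rcases List.mem_append.1 h with h | h
    · have := mem_promotionWord.1 h; omega
    · have := ih h; omega

lemma promotionWord_letters {k n : ℕ} (hk : k ≤ n) : ∀ i ∈ promotionWord k, 1 ≤ i ∧ i ≤ n :=
  fun i hi => by have := mem_promotionWord.1 hi; omega

lemma evacuationWord_letters {k n : ℕ} (hk : k ≤ n + 1) :
    ∀ i ∈ evacuationWord k, 1 ≤ i ∧ i ≤ n :=
  fun i hi => by have := mem_evacuationWord hi; omega

namespace FarCommutingInvolutions

variable {P : α → Prop} {n : ℕ} {a : α}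

lemma applyWord_mapsTo (h : FarCommutingInvolutions t P n) {w : List ℕ}
    (hw : ∀ i ∈ w, 1 ≤ i ∧ i ≤ n) (ha : P a) : P (applyWord t w a) := by
  induction w generalizing a with
  | nil => exact ha
  | cons i w ih =>
    have hi := hw i List.mem_cons_self
    exact ih (fun j hj => hw j (List.mem_cons_of_mem i hj)) (h.mapsTo i hi.1 hi.2 a ha)

lemma applyWord_reverse_applyWord (h : FarCommutingInvolutions t P n) {w : List ℕ}
    (hw : ∀ i ∈ w, 1 ≤ i ∧ i ≤ n) (ha : P a) : applyWord t w.reverse (applyWord t w a) = a := by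
  induction w generalizing a with
  | nil => rfl
  | cons i w ih =>
    have hi := hw i List.mem_cons_self
    simp only [List.reverse_cons, applyWord_append, applyWord_cons, applyWord_nil]
    rw [ih (fun j hj => hw j (List.mem_cons_of_mem i hj)) (h.mapsTo i hi.1 hi.2 a ha)]
    exact h.involutive i hi.1 hi.2 a ha

lemma applyWord_applyWord_reverse (h : FarCommutingInvolutions t P n) {w : List ℕ}
    (hw : ∀ i ∈ w, 1 ≤ i ∧ i ≤ n) (ha : P a) : applyWord t w (applyWord t w.reverse a) = a := by
  simpa using h.applyWord_reverse_applyWord (w := w.reverse) (by simpa using hw) ha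

lemma applyWord_comm_letter (h : FarCommutingInvolutions t P n) {w : List ℕ} {j : ℕ}
    (hw : ∀ i ∈ w, 1 ≤ i ∧ i ≤ n) (hj : 1 ≤ j ∧ j ≤ n)
    (hfar : ∀ i ∈ w, i + 2 ≤ j ∨ j + 2 ≤ i) (ha : P a) :
    applyWord t w (t j a) = t j (applyWord t w a) := by
  induction w generalizing a with
  | nil => rfl
  | cons i w ih =>
    have hi := hw i List.mem_cons_self
    have hcomm : t i (t j a) = t j (t i a) := by
      rcases hfar i List.mem_cons_self with hij | hji
      · exact h.comm i j hi.1 hij hj.2 a ha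
      · exact (h.comm j i hj.1 hji hi.2 a ha).symm
    rw [applyWord_cons, applyWord_cons, hcomm,
      ih (fun k hk => hw k (List.mem_cons_of_mem i hk))
        (fun k hk => hfar k (List.mem_cons_of_mem i hk)) (h.mapsTo i hi.1 hi.2 a ha)]

lemma applyWord_comm (h : FarCommutingInvolutions t P n) {w₁ w₂ : List ℕ}
    (hw₁ : ∀ i ∈ w₁, 1 ≤ i ∧ i ≤ n) (hw₂ : ∀ i ∈ w₂, 1 ≤ i ∧ i ≤ n)
    (hfar : ∀ i ∈ w₁, ∀ j ∈ w₂, i + 2 ≤ j ∨ j + 2 ≤ i) (ha : P a) :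
    applyWord t w₂ (applyWord t w₁ a) = applyWord t w₁ (applyWord t w₂ a) := by
  induction w₁ generalizing a with
  | nil => rfl
  | cons i w₁ ih =>
    have hi := hw₁ i List.mem_cons_self
    rw [applyWord_cons, applyWord_cons,
      ih (fun k hk => hw₁ k (List.mem_cons_of_mem i hk))
        (fun k hk => hfar k (List.mem_cons_of_mem i hk)) (h.mapsTo i hi.1 hi.2 a ha),
      h.applyWord_comm_letter hw₂ hi
        (fun k hk => (hfar i List.mem_cons_self k hk).symm) ha]

lemma promotionWord_applyWord_evacuationWord (h : FarCommutingInvolutions t P n) {k : ℕ}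
    (hk : k ≤ n) (ha : P a) :
    applyWord t (promotionWord k) (applyWord t (evacuationWord k) a) =
      applyWord t (evacuationWord k) (applyWord t (promotionWord k).reverse a) := by
  induction k generalizing a with
  | zero => rfl
  | succ k ih =>
    have hc := promotionWord_letters (n := n) (k := k) (by omega)
    have he := evacuationWord_letters (n := n) (k := k) (by omega)
    simp only [evacuationWord, promotionWord_succ, List.reverse_append, List.reverse_singleton,
      applyWord_append, applyWord_cons, applyWord_nil]
    rw [ih (by omega) (h.applyWord_mapsTo hc ha), h.applyWord_reverse_applyWord hc ha,
      h.applyWord_applyWord_reverse hc (h.mapsTo (k + 1) (by omega) hk a ha)]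
    exact (h.applyWord_comm_letter he ⟨by omega, hk⟩
      (fun i hi => by have := mem_evacuationWord hi; omega) ha).symm

lemma evacuationWord_involutive (h : FarCommutingInvolutions t P n) {k : ℕ}
    (hk : k ≤ n + 1) (ha : P a) :
    applyWord t (evacuationWord k) (applyWord t (evacuationWord k) a) = a := by
  induction k generalizing a with
  | zero => rfl
  | succ k ih =>
    have hc := promotionWord_letters (n := n) (k := k) (by omega)
    simp only [evacuationWord, applyWord_append]
    rw [h.promotionWord_applyWord_evacuationWord (by omega) (h.applyWord_mapsTo hc ha),
      h.applyWord_reverse_applyWord hc ha, ih (by omega) ha]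

lemma promotionWord_applyWord_evacuationWord_succ (h : FarCommutingInvolutions t P n) {k : ℕ}
    (hk : k ≤ n) (ha : P a) :
    applyWord t (promotionWord k) (applyWord t (evacuationWord (k + 1)) a) =
      applyWord t (evacuationWord k) a := by
  have hc := promotionWord_letters (n := n) (k := k) hk
  simp only [evacuationWord, applyWord_append]
  rw [h.promotionWord_applyWord_evacuationWord hk (h.applyWord_mapsTo hc ha),
    h.applyWord_reverse_applyWord hc ha]

lemma promotionWord_conj_evacuationWord (h : FarCommutingInvolutions t P n) {d : ℕ}
    (hd : d ≤ n + 1) (ha : P a) :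
    applyWord t (promotionWord (d - 1))
        (applyWord t (evacuationWord d) (applyWord t (promotionWord (d - 1)) a)) =
      applyWord t (evacuationWord d) a := by
  cases d with
  | zero => rfl
  | succ k =>
    have hc := promotionWord_letters (n := n) (k := k) (by omega)
    rw [Nat.add_sub_cancel, h.promotionWord_applyWord_evacuationWord_succ (by omega)
      (h.applyWord_mapsTo hc ha)]
    simp only [evacuationWord, applyWord_append]

lemma exists_iterate_promotionWord_applyWord_evacuationWord
    (h : FarCommutingInvolutions t P n) {d m : ℕ} (hd : d ≤ n + 1) (hm : m ≤ d) :
    ∃ β : List ℕ, (∀ i ∈ β, d - m + 1 ≤ i ∧ i + 1 ≤ d) ∧ ∀ a, P a →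
      (applyWord t (promotionWord (d - 1)))^[m] (applyWord t (evacuationWord d) a) =
        applyWord t β (applyWord t (evacuationWord (d - m)) a) := by
  induction m with
  | zero => exact ⟨[], by simp, fun a _ => rfl⟩
  | succ m ih =>
    obtain ⟨β, hβ, hiter⟩ := ih (by omega)
    obtain ⟨k, hk⟩ : ∃ k, d - m = k + 1 := ⟨d - m - 1, by omega⟩
    refine ⟨β ++ List.range' (k + 1) m, fun i hi => ?_, fun a ha => ?_⟩
    · rcases List.mem_append.1 hi with hi | hi
      · have := hβ i hi; omega
      · have := List.mem_range'_1.1 hi; omega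
    have hc := promotionWord_letters (n := n) (k := k) (by omega)
    have hsplit : promotionWord (d - 1) = promotionWord k ++ List.range' (k + 1) m := by
      rw [← promotionWord_add]; congr 1; omega
    rw [Function.iterate_succ_apply', hiter a ha, hsplit, applyWord_append, hk,
      ← h.applyWord_comm hc (fun i hi => by have := hβ i hi; omega)
        (fun i hi j hj => by have := mem_promotionWord.1 hi; have := hβ j hj; omega)
        (h.applyWord_mapsTo (evacuationWord_letters (by omega)) ha),
      h.promotionWord_applyWord_evacuationWord_succ (by omega) ha, applyWord_append,
      show d - (m + 1) = k by omega]

end FarCommutingInvolutions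

end Words
lemma adj_symm {x y : ℕ × ℕ} (h : adj x y) : adj y x := by unfold adj at *; omega

section KBenderKnuth

variable (shape : Finset (ℕ × ℕ))

def IsFreeLow (i : ℕ) (f : ℕ × ℕ → ℕ) (x : ℕ × ℕ) : Prop :=
  x ∈ shape ∧ f x = i ∧ ¬∃ y ∈ shape, adj x y ∧ f y = i + 1

def IsFreeHigh (i : ℕ) (f : ℕ × ℕ → ℕ) (x : ℕ × ℕ) : Prop :=
  x ∈ shape ∧ f x = i + 1 ∧ ¬∃ y ∈ shape, adj x y ∧ f y = i

instance (i : ℕ) (f : ℕ × ℕ → ℕ) (x : ℕ × ℕ) : Decidable (IsFreeLow shape i f x) := by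
  unfold IsFreeLow; infer_instance

instance (i : ℕ) (f : ℕ × ℕ → ℕ) (x : ℕ × ℕ) : Decidable (IsFreeHigh shape i f x) := by
  unfold IsFreeHigh; infer_instance

def kBenderKnuth (i : ℕ) (f : ℕ × ℕ → ℕ) : ℕ × ℕ → ℕ := fun x =>
  if IsFreeLow shape i f x then i + 1 else if IsFreeHigh shape i f x then i else f x

def IsProperLabelling (f : ℕ × ℕ → ℕ) : Prop :=
  ∀ x ∈ shape, ∀ y ∈ shape, adj x y → f x ≠ f y

variable {shape} {d i j v : ℕ} {f g : ℕ × ℕ → ℕ} {x y : ℕ × ℕ}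

lemma IsInc.isProperLabelling (hf : IsInc shape d f) : IsProperLabelling shape f := by
  rintro ⟨a, b⟩ hx ⟨c, e⟩ hy (⟨h₁, h₂ | h₂⟩ | ⟨h₁, h₂ | h₂⟩) <;> dsimp only at h₁ h₂ <;>
    subst h₁ h₂
  · exact (hf.2.1 _ _ hy hx).ne'
  · exact (hf.2.1 _ _ hx hy).ne
  · exact (hf.2.2.1 _ _ hy hx).ne'
  · exact (hf.2.2.1 _ _ hx hy).ne

lemma kBenderKnuth_of_isFreeLow (h : IsFreeLow shape i f x) : kBenderKnuth shape i f x = i + 1 :=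
  if_pos h

lemma kBenderKnuth_of_isFreeHigh (h : IsFreeHigh shape i f x) : kBenderKnuth shape i f x = i := by
  have hL : ¬IsFreeLow shape i f x := fun h' => by have := h.2.1; have := h'.2.1; omega
  simp only [kBenderKnuth, hL, h, if_true, if_false]

lemma kBenderKnuth_of_notMem (hx : x ∉ shape) : kBenderKnuth shape i f x = f x := by
  simp [kBenderKnuth, IsFreeLow, IsFreeHigh, hx]

lemma kBenderKnuth_eq_or (shape : Finset (ℕ × ℕ)) (i : ℕ) (f : ℕ × ℕ → ℕ) (x : ℕ × ℕ) :
    kBenderKnuth shape i f x = f x ∨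
      (f x = i ∨ f x = i + 1) ∧
        (kBenderKnuth shape i f x = i ∨ kBenderKnuth shape i f x = i + 1) := by
  unfold kBenderKnuth
  split_ifs with hL hH
  · exact Or.inr ⟨Or.inl hL.2.1, Or.inr rfl⟩
  · exact Or.inr ⟨Or.inr hH.2.1, Or.inl rfl⟩
  · exact Or.inl rfl

lemma kBenderKnuth_eq_iff (h₁ : v ≠ i) (h₂ : v ≠ i + 1) :
    kBenderKnuth shape i f x = v ↔ f x = v := by
  rcases kBenderKnuth_eq_or shape i f x with h | h <;> omega

lemma kBenderKnuth_le_iff (hij : i ≠ j) : kBenderKnuth shape i f x ≤ j ↔ f x ≤ j := by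
  rcases kBenderKnuth_eq_or shape i f x with h | h <;> omega

lemma kBenderKnuth_of_adj_high (hy : y ∈ shape) (hxy : adj x y)
    (hfx : f x = i) (hfy : f y = i + 1) : kBenderKnuth shape i f x = i := by
  have hL : ¬IsFreeLow shape i f x := fun h => h.2.2 ⟨y, hy, hxy, hfy⟩
  have hH : ¬IsFreeHigh shape i f x := fun h => by have := h.2.1; omega
  simp only [kBenderKnuth, hL, hH, if_false, hfx]

lemma kBenderKnuth_of_adj_low (hy : y ∈ shape) (hxy : adj x y)
    (hfx : f x = i + 1) (hfy : f y = i) : kBenderKnuth shape i f x = i + 1 := by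
  have hL : ¬IsFreeLow shape i f x := fun h => by have := h.2.1; omega
  have hH : ¬IsFreeHigh shape i f x := fun h => h.2.2 ⟨y, hy, hxy, hfy⟩
  simp only [kBenderKnuth, hL, hH, if_false, hfx]

lemma kBenderKnuth_congr (h₁ : ∀ y, g y = i ↔ f y = i) (h₂ : ∀ y, g y = i + 1 ↔ f y = i + 1)
    (hx : g x = f x) : kBenderKnuth shape i g x = kBenderKnuth shape i f x := by
  simp only [kBenderKnuth, IsFreeLow, IsFreeHigh, h₁, h₂, hx]

lemma kBenderKnuth_comm (hij : i + 2 ≤ j) :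
    kBenderKnuth shape i (kBenderKnuth shape j f) =
      kBenderKnuth shape j (kBenderKnuth shape i f) := by
  funext x
  have hj := kBenderKnuth_eq_or shape j f x
  have hi := kBenderKnuth_eq_or shape i f x
  by_cases hx : f x = i ∨ f x = i + 1
  · rw [kBenderKnuth_congr (g := kBenderKnuth shape j f) (f := f)
      (fun y => kBenderKnuth_eq_iff (by omega) (by omega))
      (fun y => kBenderKnuth_eq_iff (by omega) (by omega)) (by omega)]
    rcases kBenderKnuth_eq_or shape j (kBenderKnuth shape i f) x with h | h <;> omega
  · rw [kBenderKnuth_congr (g := kBenderKnuth shape i f) (f := f)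
      (fun y => kBenderKnuth_eq_iff (by omega) (by omega))
      (fun y => kBenderKnuth_eq_iff (by omega) (by omega)) (by omega)]
    rcases kBenderKnuth_eq_or shape i (kBenderKnuth shape j f) x with h | h <;> omega

lemma IsFreeLow.isFreeHigh_kBenderKnuth (hf : IsProperLabelling shape f)
    (h : IsFreeLow shape i f x) : IsFreeHigh shape i (kBenderKnuth shape i f) x := by
  obtain ⟨hx, hfx, hfree⟩ := h
  refine ⟨hx, kBenderKnuth_of_isFreeLow ⟨hx, hfx, hfree⟩, fun ⟨y, hy, hxy, hgy⟩ => ?_⟩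
  have hne := hf x hx y hy hxy
  rcases kBenderKnuth_eq_or shape i f y with h | h
  · omega
  · exact hfree ⟨y, hy, hxy, by omega⟩

lemma IsFreeHigh.isFreeLow_kBenderKnuth (hf : IsProperLabelling shape f)
    (h : IsFreeHigh shape i f x) : IsFreeLow shape i (kBenderKnuth shape i f) x := by
  obtain ⟨hx, hfx, hfree⟩ := h
  refine ⟨hx, kBenderKnuth_of_isFreeHigh ⟨hx, hfx, hfree⟩, fun ⟨y, hy, hxy, hgy⟩ => ?_⟩
  have hne := hf x hx y hy hxy
  rcases kBenderKnuth_eq_or shape i f y with h | h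
  · omega
  · exact hfree ⟨y, hy, hxy, by omega⟩

lemma kBenderKnuth_kBenderKnuth (hf : IsProperLabelling shape f) :
    kBenderKnuth shape i (kBenderKnuth shape i f) = f := by
  funext x
  by_cases hL : IsFreeLow shape i f x
  · rw [kBenderKnuth_of_isFreeHigh (hL.isFreeHigh_kBenderKnuth hf), hL.2.1]
  by_cases hH : IsFreeHigh shape i f x
  · rw [kBenderKnuth_of_isFreeLow (hH.isFreeLow_kBenderKnuth hf), hH.2.1]
  have hfix : kBenderKnuth shape i f x = f x := by simp only [kBenderKnuth, hL, hH, if_false]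
  by_cases hx : x ∈ shape
  swap
  · rw [kBenderKnuth_of_notMem hx, kBenderKnuth_of_notMem hx]
  by_cases hi : f x = i
  · obtain ⟨y, hy, hxy, hfy⟩ : ∃ y ∈ shape, adj x y ∧ f y = i + 1 := by
      simpa [IsFreeLow, hx, hi] using hL
    rw [kBenderKnuth_of_adj_high hy hxy (hfix.trans hi)
      (kBenderKnuth_of_adj_low hx (adj_symm hxy) hfy hi), hi]
  by_cases hi' : f x = i + 1
  · obtain ⟨y, hy, hxy, hfy⟩ : ∃ y ∈ shape, adj x y ∧ f y = i := by
      simpa [IsFreeHigh, hx, hi'] using hH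
    rw [kBenderKnuth_of_adj_low hy hxy (hfix.trans hi')
      (kBenderKnuth_of_adj_high hx (adj_symm hxy) hfy hi'), hi']
  exact (kBenderKnuth_eq_iff hi hi').2 hfix

lemma kBenderKnuth_lt_of_adj (hx : x ∈ shape) (hy : y ∈ shape) (hxy : adj x y)
    (hlt : f x < f y) : kBenderKnuth shape i f x < kBenderKnuth shape i f y := by
  by_cases hpair : f x = i ∧ f y = i + 1
  · rw [kBenderKnuth_of_adj_high hy hxy hpair.1 hpair.2,
      kBenderKnuth_of_adj_low hx (adj_symm hxy) hpair.2 hpair.1]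
    omega
  rcases kBenderKnuth_eq_or shape i f x with h | h <;>
    rcases kBenderKnuth_eq_or shape i f y with h' | h' <;> omega

lemma exists_kBenderKnuth_eq_low (hx : x ∈ shape) (hfx : f x = i + 1) :
    ∃ y ∈ shape, kBenderKnuth shape i f y = i := by
  by_cases hH : IsFreeHigh shape i f x
  · exact ⟨x, hx, kBenderKnuth_of_isFreeHigh hH⟩
  obtain ⟨y, hy, hxy, hfy⟩ : ∃ y ∈ shape, adj x y ∧ f y = i := by
    simpa [IsFreeHigh, hx, hfx] using hH
  exact ⟨y, hy, kBenderKnuth_of_adj_high hx (adj_symm hxy) hfy hfx⟩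

lemma exists_kBenderKnuth_eq_high (hx : x ∈ shape) (hfx : f x = i) :
    ∃ y ∈ shape, kBenderKnuth shape i f y = i + 1 := by
  by_cases hL : IsFreeLow shape i f x
  · exact ⟨x, hx, kBenderKnuth_of_isFreeLow hL⟩
  obtain ⟨y, hy, hxy, hfy⟩ : ∃ y ∈ shape, adj x y ∧ f y = i + 1 := by
    simpa [IsFreeLow, hx, hfx] using hL
  exact ⟨y, hy, kBenderKnuth_of_adj_low hx (adj_symm hxy) hfy hfx⟩

lemma isInc_kBenderKnuth (hf : IsInc shape d f) (hi : 1 ≤ i) (hid : i + 1 ≤ d) :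
    IsInc shape d (kBenderKnuth shape i f) := by
  obtain ⟨hzero, hrow, hcol, hbound, hsurj⟩ := hf
  refine ⟨fun x hx => (kBenderKnuth_of_notMem hx).trans (hzero x hx),
    fun a b ha hb => kBenderKnuth_lt_of_adj ha hb (Or.inl ⟨rfl, Or.inr rfl⟩) (hrow a b ha hb),
    fun a b ha hb => kBenderKnuth_lt_of_adj ha hb (Or.inr ⟨rfl, Or.inr rfl⟩) (hcol a b ha hb),
    fun x hx => ?_, fun v hv hvd => ?_⟩
  · have := hbound x hx
    rcases kBenderKnuth_eq_or shape i f x with h | h <;> omega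
  · by_cases hvi : v = i
    · obtain ⟨x, hx, hfx⟩ := hsurj (i + 1) (by omega) hid
      exact hvi ▸ exists_kBenderKnuth_eq_low (i := i) hx hfx
    by_cases hvi' : v = i + 1
    · obtain ⟨x, hx, hfx⟩ := hsurj i hi (by omega)
      exact hvi' ▸ exists_kBenderKnuth_eq_high (i := i) hx hfx
    obtain ⟨x, hx, hfx⟩ := hsurj v hv hvd
    exact ⟨x, hx, (kBenderKnuth_eq_iff hvi hvi').2 hfx⟩

lemma farCommutingInvolutions_kBenderKnuth (shape : Finset (ℕ × ℕ)) (d : ℕ) :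
    FarCommutingInvolutions (kBenderKnuth shape) (IsInc shape d) (d - 1) where
  mapsTo _ hi hid _ hf := isInc_kBenderKnuth hf hi (by omega)
  involutive _ _ _ _ hf := kBenderKnuth_kBenderKnuth hf.isProperLabelling
  comm _ _ _ hij _ _ _ := kBenderKnuth_comm hij

end KBenderKnuth

section Promotion

variable {shape : Finset (ℕ × ℕ)} {d : ℕ} {f : ℕ × ℕ → ℕ}

lemma applyWord_kBenderKnuth_le_iff {w : List ℕ} {j : ℕ} (hw : ∀ i ∈ w, i ≠ j)
    (f : ℕ × ℕ → ℕ) (x : ℕ × ℕ) : applyWord (kBenderKnuth shape) w f x ≤ j ↔ f x ≤ j := by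
  induction w generalizing f with
  | nil => rfl
  | cons i w ih =>
    rw [applyWord_cons, ih (fun k hk => hw k (List.mem_cons_of_mem i hk)),
      kBenderKnuth_le_iff (hw i List.mem_cons_self)]

lemma isInc_applyWord_promotionWord (hf : IsInc shape d f) :
    IsInc shape d (applyWord (kBenderKnuth shape) (promotionWord (d - 1)) f) :=
  (farCommutingInvolutions_kBenderKnuth shape d).applyWord_mapsTo (promotionWord_letters le_rfl) hf

lemma isInc_applyWord_evacuationWord (hf : IsInc shape d f) :
    IsInc shape d (applyWord (kBenderKnuth shape) (evacuationWord d) f) :=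
  (farCommutingInvolutions_kBenderKnuth shape d).applyWord_mapsTo
    (evacuationWord_letters (by omega)) hf

/-- After `switch_{2,•}, …, switch_{k+1,•}` the labelling is `bulletLabel k` applied to the
tableau `c_k T`: the bullet (encoded by `0`) sits where `c_k T` has `k + 1`, and the labels
`2, …, k + 1` sit where it has `1, …, k`. -/
def bulletLabel (k v : ℕ) : ℕ :=
  if v = k + 1 then 0 else if v ≤ k then v + 1 else v

lemma exists_adj_congr {g : ℕ × ℕ → ℕ} {x : ℕ × ℕ} {v w : ℕ}
    (h : ∀ y ∈ shape, g y = v ↔ f y = w) :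
    (∃ y ∈ shape, adj x y ∧ g y = v) ↔ ∃ y ∈ shape, adj x y ∧ f y = w :=
  ⟨fun ⟨y, hy, hxy, hv⟩ => ⟨y, hy, hxy, (h y hy).1 hv⟩,
    fun ⟨y, hy, hxy, hw⟩ => ⟨y, hy, hxy, (h y hy).2 hw⟩⟩

lemma kswitch_eq_bulletLabel_kBenderKnuth {S u : ℕ × ℕ → ℕ} {k : ℕ} {x : ℕ × ℕ}
    (hS : ∀ y ∈ shape, S y = bulletLabel k (u y)) (hx : x ∈ shape) :
    kswitch shape (k + 2) S x = bulletLabel (k + 1) (kBenderKnuth shape (k + 1) u x) := by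
  have h₀ : ∀ y ∈ shape, S y = 0 ↔ u y = k + 1 := fun y hy => by
    rw [hS y hy, bulletLabel]; grind
  have h₂ : ∀ y ∈ shape, S y = k + 2 ↔ u y = k + 1 + 1 := fun y hy => by
    rw [hS y hy, bulletLabel]; grind
  simp only [kswitch, kBenderKnuth, IsFreeLow, IsFreeHigh, hx, true_and, exists_adj_congr h₀,
    exists_adj_congr h₂, h₀ x hx, h₂ x hx]
  rw [hS x hx]
  by_cases hHigh : ∃ y ∈ shape, adj x y ∧ u y = k + 1 + 1 <;>
    by_cases hLow : ∃ y ∈ shape, adj x y ∧ u y = k + 1 <;>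
    simp only [hHigh, hLow, and_true, and_false, not_true_eq_false, not_false_eq_true,
      bulletLabel] <;>
    split_ifs <;> first | contradiction | omega

lemma foldl_kswitch_eq_bulletLabel (hpos : ∀ y ∈ shape, 1 ≤ f y) (k : ℕ) {x : ℕ × ℕ}
    (hx : x ∈ shape) :
    (List.range k).foldl (fun h i => kswitch shape (i + 2) h)
        (fun y => if f y = 1 then 0 else f y) x =
      bulletLabel k (applyWord (kBenderKnuth shape) (promotionWord k) f x) := by
  induction k generalizing x with
  | zero =>
    have hfx := hpos x hx
    simp only [List.range_zero, List.foldl_nil, promotionWord, List.range'_zero, applyWord_nil,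
      bulletLabel]
    split_ifs <;> omega
  | succ k ih =>
    rw [List.range_succ, List.foldl_append, List.foldl_cons, List.foldl_nil, promotionWord_succ,
      applyWord_append, applyWord_cons, applyWord_nil]
    exact kswitch_eq_bulletLabel_kBenderKnuth (fun y hy => ih hy) hx

lemma kpromote_eq_applyWord (hf : IsInc shape d f) :
    kpromote shape d f = applyWord (kBenderKnuth shape) (promotionWord (d - 1)) f := by
  have hg := isInc_applyWord_promotionWord hf
  funext x
  by_cases hx : x ∈ shape
  · have hbound := hg.2.2.2.1 x hx
    simp only [kpromote, hx, if_true,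
      foldl_kswitch_eq_bulletLabel (fun y hy => (hf.2.2.2.1 y hy).1) (d - 1) hx, bulletLabel]
    split_ifs <;> first | contradiction | omega
  · simp only [kpromote, hx, if_false]
    exact (hg.1 x hx).symm

lemma isInc_kpromote (hf : IsInc shape d f) : IsInc shape d (kpromote shape d f) := by
  rw [kpromote_eq_applyWord hf]
  exact isInc_applyWord_promotionWord hf

lemma iterate_kpromote (hf : IsInc shape d f) (m : ℕ) :
    (kpromote shape d)^[m] f = (applyWord (kBenderKnuth shape) (promotionWord (d - 1)))^[m] f := by
  induction m generalizing f with
  | zero => rfl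
  | succ m ih =>
    rw [Function.iterate_succ_apply, Function.iterate_succ_apply, ih (isInc_kpromote hf),
      kpromote_eq_applyWord hf]

lemma iterate_kpromote_le_iff (hf : IsInc shape d f) {j : ℕ} (hj : 1 ≤ j) (hjd : j ≤ d)
    (x : ℕ × ℕ) :
    (kpromote shape d)^[d - j] f x ≤ j ↔
      applyWord (kBenderKnuth shape) (evacuationWord d) f x ≤ j := by
  have h := farCommutingInvolutions_kBenderKnuth shape d
  set E := applyWord (kBenderKnuth shape) (evacuationWord d) f
  have hfE : f = applyWord (kBenderKnuth shape) (evacuationWord d) E :=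
    (h.evacuationWord_involutive (by omega) hf).symm
  -- `β` only has letters above `j`, `evacuationWord j` only letters below `j`.
  obtain ⟨β, hβ, hiter⟩ :=
    h.exists_iterate_promotionWord_applyWord_evacuationWord (d := d) (m := d - j)
      (by omega) (by omega)
  rw [iterate_kpromote hf, hfE, hiter E (isInc_applyWord_evacuationWord hf),
    applyWord_kBenderKnuth_le_iff (fun i hi => by have := hβ i hi; omega),
    applyWord_kBenderKnuth_le_iff (fun i hi => by have := mem_evacuationWord hi; omega)]

lemma kevac_eq_applyWord (hf : IsInc shape d f) :
    kevac shape d f = applyWord (kBenderKnuth shape) (evacuationWord d) f := by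
  have hE := isInc_applyWord_evacuationWord hf
  funext x
  by_cases hx : x ∈ shape
  · have hEx := hE.2.2.2.1 x hx
    have hmem : applyWord (kBenderKnuth shape) (evacuationWord d) f x ∈
        (Finset.Icc 1 d).filter fun j => (kpromote shape d)^[d - j] f x ≤ j :=
      Finset.mem_filter.2
        ⟨Finset.mem_Icc.2 hEx, (iterate_kpromote_le_iff hf hEx.1 hEx.2 x).2 le_rfl⟩
    simp only [kevac, hx, if_true]
    rw [dif_pos ⟨_, hmem⟩]
    refine le_antisymm (Finset.min'_le _ _ hmem) (Finset.le_min' _ _ _ fun j hj => ?_)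
    obtain ⟨hj, hle⟩ := Finset.mem_filter.1 hj
    exact (iterate_kpromote_le_iff hf (Finset.mem_Icc.1 hj).1 (Finset.mem_Icc.1 hj).2 x).1 hle
  · simp only [kevac, hx, if_false]
    exact (hE.1 x hx).symm

lemma isInc_kevac (hf : IsInc shape d f) : IsInc shape d (kevac shape d f) := by
  rw [kevac_eq_applyWord hf]
  exact isInc_applyWord_evacuationWord hf

end Promotion

theorem stmt19_general (μ : YoungDiagram) (q : ℕ)
    (T : ℕ × ℕ → ℕ) (hT : IsInc μ.cells (μ.cells.card - q) T) :
    kevac μ.cells (μ.cells.card - q) (kevac μ.cells (μ.cells.card - q) T) = T ∧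
    kpromote μ.cells (μ.cells.card - q)
        (kevac μ.cells (μ.cells.card - q) (kpromote μ.cells (μ.cells.card - q) T)) =
      kevac μ.cells (μ.cells.card - q) T := by
  have h := farCommutingInvolutions_kBenderKnuth μ.cells (μ.cells.card - q)
  constructor
  · rw [kevac_eq_applyWord (isInc_kevac hT), kevac_eq_applyWord hT]
    exact h.evacuationWord_involutive (by omega) hT
  · rw [kpromote_eq_applyWord (isInc_kevac (isInc_kpromote hT)),
      kevac_eq_applyWord (isInc_kpromote hT),
      kpromote_eq_applyWord hT, kevac_eq_applyWord hT]
    exact h.promotionWord_conj_evacuationWord (by omega) hT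

theorem stmt19 (μ : YoungDiagram) (q : ℕ) (hq : q < μ.cells.card)
    (T : ℕ × ℕ → ℕ) (hT : IsInc μ.cells (μ.cells.card - q) T) :
    kevac μ.cells (μ.cells.card - q) (kevac μ.cells (μ.cells.card - q) T) = T ∧
    kpromote μ.cells (μ.cells.card - q)
        (kevac μ.cells (μ.cells.card - q) (kpromote μ.cells (μ.cells.card - q) T)) =
      kevac μ.cells (μ.cells.card - q) T :=
  stmt19_general μ q T hT

end Homomesy
end
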